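/- For every polynomial function w : ℝ² → ℝ of degree at most 3, one has on K the identity ∇²w − Π_HHJ(∇²w) = Σ_{i=1}^{4} a_i (∇²φ_i − Π_HHJ(∇²φ_i)), where a₁ = |K|^{1/2} ∂³w/∂x₁³, a₂ = |K|^{1/2} ∂³w/∂x₁²∂x₂, a₃ = |K|^{1/2} ∂³w/∂x₁∂x₂², a₄ = |K|^{1/2} ∂³w/∂x₂³. -/

import Mathlib

noncomputable section
open MeasureTheory

namespace PaperStmt

/-- Euclidean dot product on `ℝ²`. -/
def dotp (v w : ℝ × ℝ) : ℝ := v.1 * w.1 + v.2 * w.2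

/-- Euclidean length on `ℝ²`. -/
def len (v : ℝ × ℝ) : ℝ := Real.sqrt (v.1 ^ 2 + v.2 ^ 2)

/-- Cross product (determinant) of two planar vectors. -/
def crossp (v w : ℝ × ℝ) : ℝ := v.1 * w.2 - v.2 * w.1

/-- The vertices `p 0, p 1, p 2` form a nondegenerate triangle listed counterclockwise. -/
def Ccw (p : Fin 3 → ℝ × ℝ) : Prop := 0 < crossp (p 1 - p 0) (p 2 - p 0)

/-- Vector of the edge `e_i` opposite vertex `p i`, oriented counterclockwise
(from `p (i+1)` to `p (i−1)`). -/
def edgeVec (p : Fin 3 → ℝ × ℝ) (i : Fin 3) : ℝ × ℝ := p (i - 1) - p (i + 1)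

/-- Length `|e_i|` of the edge opposite vertex `p i`. -/
def elen (p : Fin 3 → ℝ × ℝ) (i : Fin 3) : ℝ := len (edgeVec p i)

/-- Unit tangent `t_i = (p_{i−1} − p_{i+1})/|e_i|` of edge `e_i`. -/
def tvec (p : Fin 3 → ℝ × ℝ) (i : Fin 3) : ℝ × ℝ := (elen p i)⁻¹ • edgeVec p i

/-- Outward unit normal `n_i` of edge `e_i` (clockwise rotation of the tangent,
which points outward for a counterclockwise triangle). -/
def nvec (p : Fin 3 → ℝ × ℝ) (i : Fin 3) : ℝ × ℝ := ((tvec p i).2, -(tvec p i).1)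

/-- Interior angle `θ_i` of the triangle at the vertex `p i`. -/
def angleAt (p : Fin 3 → ℝ × ℝ) (i : Fin 3) : ℝ :=
  Real.arccos (dotp (p (i + 1) - p i) (p (i - 1) - p i) /
    (len (p (i + 1) - p i) * len (p (i - 1) - p i)))

/-- Outer product `v wᵀ` of two planar (column) vectors, as a `2 × 2` matrix. -/
def outerProd (v w : ℝ × ℝ) : Matrix (Fin 2) (Fin 2) ℝ :=
  !![v.1 * w.1, v.1 * w.2; v.2 * w.1, v.2 * w.2]

/-- Basis matrices `φ_HHJ^i = −(1/(2 sin θ_{i−1} sin θ_{i+1})) (t_{i−1} t_{i+1}ᵀ + t_{i+1} t_{i−1}ᵀ)`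
of the lowest-order Hellan–Herrmann–Johnson element. -/
def phiHHJ (p : Fin 3 → ℝ × ℝ) (i : Fin 3) : Matrix (Fin 2) (Fin 2) ℝ :=
  (-(2 * Real.sin (angleAt p (i - 1)) * Real.sin (angleAt p (i + 1)))⁻¹) •
    (outerProd (tvec p (i - 1)) (tvec p (i + 1)) + outerProd (tvec p (i + 1)) (tvec p (i - 1)))

/-- The quadratic form `vᵀ τ v` of a `2 × 2` matrix on a planar vector. -/
def qf (τ : Matrix (Fin 2) (Fin 2) ℝ) (v : ℝ × ℝ) : ℝ :=
  v.1 * (τ 0 0 * v.1 + τ 0 1 * v.2) + v.2 * (τ 1 0 * v.1 + τ 1 1 * v.2)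

end PaperStmt

namespace PaperStmt

/-- Directional derivative of `f` along `v`. -/
def dderiv (v : ℝ × ℝ) (f : ℝ × ℝ → ℝ) : ℝ × ℝ → ℝ := fun x => fderiv ℝ f x v

/-- Second directional derivative `D²f[u, v]`. -/
def d2 (u v : ℝ × ℝ) (f : ℝ × ℝ → ℝ) : ℝ × ℝ → ℝ := dderiv u (dderiv v f)

/-- Third directional derivative `D³f[u, v, w]`. -/
def d3 (u v w : ℝ × ℝ) (f : ℝ × ℝ → ℝ) : ℝ × ℝ → ℝ := dderiv u (dderiv v (dderiv w f))

end PaperStmt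

namespace PaperStmt

/-- Area `|K|` of the (counterclockwise) triangle with vertices `p`. -/
def area (p : Fin 3 → ℝ × ℝ) : ℝ := crossp (p 1 - p 0) (p 2 - p 0) / 2

/-- Centroid `M_K` of the triangle with vertices `p`. -/
def centroid (p : Fin 3 → ℝ × ℝ) : ℝ × ℝ := (3 : ℝ)⁻¹ • (p 0 + p 1 + p 2)

/-- The (closed) triangle `K` with vertices `p`, as a subset of `ℝ²`. -/
def tri (p : Fin 3 → ℝ × ℝ) : Set (ℝ × ℝ) := convexHull ℝ {p 0, p 1, p 2}

/-- The cubic polynomials `φ₁, φ₂, φ₃, φ₄` centered at the centroid: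
`φ₁ = (x₁−M₁)³/(6|K|^{1/2})`, `φ₂ = (x₁−M₁)²(x₂−M₂)/(2|K|^{1/2})`,
`φ₃ = (x₁−M₁)(x₂−M₂)²/(2|K|^{1/2})`, `φ₄ = (x₂−M₂)³/(6|K|^{1/2})`. -/
def phiK (p : Fin 3 → ℝ × ℝ) : Fin 4 → ℝ × ℝ → ℝ :=
  ![fun x => (x.1 - (centroid p).1) ^ 3 / (6 * Real.sqrt (area p)),
    fun x => (x.1 - (centroid p).1) ^ 2 * (x.2 - (centroid p).2) / (2 * Real.sqrt (area p)),
    fun x => (x.1 - (centroid p).1) * (x.2 - (centroid p).2) ^ 2 / (2 * Real.sqrt (area p)),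
    fun x => (x.2 - (centroid p).2) ^ 3 / (6 * Real.sqrt (area p))]

/-- Hessian `∇²f` of a scalar function on `ℝ²`, as a `2 × 2` matrix field. -/
def hess (f : ℝ × ℝ → ℝ) (x : ℝ × ℝ) : Matrix (Fin 2) (Fin 2) ℝ :=
  !![d2 (1, 0) (1, 0) f x, d2 (1, 0) (0, 1) f x;
     d2 (0, 1) (1, 0) f x, d2 (0, 1) (0, 1) f x]

/-- Frobenius inner product `A : B` of two `2 × 2` matrices. -/
def frob (A B : Matrix (Fin 2) (Fin 2) ℝ) : ℝ := ∑ i : Fin 2, ∑ j : Fin 2, A i j * B i j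

/-- Mean value `(1/|e_j|) ∫_{e_j} g ds` of `g` over the edge `e_j` (with respect to
arclength measure), computed by the unit-speed-normalized parametrization of `e_j`. -/
def edgeAvg (p : Fin 3 → ℝ × ℝ) (j : Fin 3) (g : ℝ × ℝ → ℝ) : ℝ :=
  ∫ s in (0:ℝ)..1, g (p (j + 1) + s • (p (j - 1) - p (j + 1)))

/-- The Hellan–Herrmann–Johnson interpolant
`Π_HHJ τ = Σ_{j=1}^{3} ((1/|e_j|) ∫_{e_j} n_jᵀ τ n_j ds) φ_HHJ^j` of a
matrix-valued field `τ`, a constant symmetric matrix. -/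
def PiHHJ (p : Fin 3 → ℝ × ℝ) (τ : ℝ × ℝ → Matrix (Fin 2) (Fin 2) ℝ) :
    Matrix (Fin 2) (Fin 2) ℝ :=
  ∑ j : Fin 3, edgeAvg p j (fun x => qf (τ x) (nvec p j)) • phiHHJ p j

/-- The constants `γ^{ij} = (1/|K|) ∫_K ((I − Π_HHJ)∇²φ_i) : ((I − Π_HHJ)∇²φ_j) dx`. -/
def gammaHHJ (p : Fin 3 → ℝ × ℝ) (i j : Fin 4) : ℝ :=
  (area p)⁻¹ *
    ∫ x in tri p,
      frob (hess (phiK p i) x - PiHHJ p (hess (phiK p i)))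
           (hess (phiK p j) x - PiHHJ p (hess (phiK p j)))

/-- Coefficients `a₁ = |K|^{1/2} ∂³w/∂x₁³`, `a₂ = |K|^{1/2} ∂³w/∂x₁²∂x₂`,
`a₃ = |K|^{1/2} ∂³w/∂x₁∂x₂²`, `a₄ = |K|^{1/2} ∂³w/∂x₂³` (the third partial
derivatives of a cubic polynomial being constant, they are evaluated at `0`). -/
def acoef (p : Fin 3 → ℝ × ℝ) (w : ℝ × ℝ → ℝ) : Fin 4 → ℝ :=
  ![Real.sqrt (area p) * d3 (1, 0) (1, 0) (1, 0) w 0,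
    Real.sqrt (area p) * d3 (1, 0) (1, 0) (0, 1) w 0,
    Real.sqrt (area p) * d3 (1, 0) (0, 1) (0, 1) w 0,
    Real.sqrt (area p) * d3 (0, 1) (0, 1) (0, 1) w 0]

end PaperStmt

namespace PaperStmt

/-- `f : ℝ² → ℝ` is a polynomial function of (total) degree at most `l`. -/
def IsPolyFun (l : ℕ) (f : ℝ × ℝ → ℝ) : Prop :=
  ∃ q : MvPolynomial (Fin 2) ℝ, q.totalDegree ≤ l ∧
    ∀ x : ℝ × ℝ, f x = MvPolynomial.eval ![x.1, x.2] q

end PaperStmt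

/-!
The Hessian of a cubic `w` is affine, and `∑ aᵢ ∇²φᵢ` is exactly its non-constant part written
around the centroid `M`, so `∇²w − ∑ aᵢ ∇²φᵢ` is the constant symmetric matrix `∇²w(M)`.
The interpolant `Π_HHJ` is linear on continuous fields and reproduces constant symmetric
matrices, so the two sides of the identity differ by `∇²w(M) − Π_HHJ ∇²w(M) = 0`.
-/

namespace PaperStmt

/-- `S a b` is the coefficient of `x₁ ^ a * x₂ ^ b`; the entries with `a + b > 3` play no role. -/
def cubic (S : Matrix (Fin 4) (Fin 4) ℝ) (x : ℝ × ℝ) : ℝ :=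
  S 0 0 + S 1 0 * x.1 + S 0 1 * x.2 + S 2 0 * x.1 ^ 2 + S 1 1 * x.1 * x.2 + S 0 2 * x.2 ^ 2
    + S 3 0 * x.1 ^ 3 + S 2 1 * x.1 ^ 2 * x.2 + S 1 2 * x.1 * x.2 ^ 2 + S 0 3 * x.2 ^ 3

lemma IsPolyFun.exists_eq_cubic {w : ℝ × ℝ → ℝ} (hw : IsPolyFun 3 w) : ∃ S, w = cubic S := by
  obtain ⟨q, hq, heval⟩ := hw
  let e : ℕ × ℕ → (Fin 2 →₀ ℕ) := fun ab => Finsupp.single 0 ab.1 + Finsupp.single 1 ab.2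
  have he : e.Injective := fun ab cd h =>
    Prod.ext (by simpa [e] using DFunLike.congr_fun h 0) (by simpa [e] using DFunLike.congr_fun h 1)
  let T : Finset (ℕ × ℕ) :=
    {(0, 0), (1, 0), (0, 1), (2, 0), (1, 1), (0, 2), (3, 0), (2, 1), (1, 2), (0, 3)}
  have hsupp : q.support ⊆ T.image e := fun d hd => by
    have hdeg : d 0 + d 1 ≤ 3 := by
      have := (MvPolynomial.le_totalDegree hd).trans hq
      rwa [Finsupp.sum_fintype _ _ fun _ => rfl, Fin.sum_univ_two] at this
    refine Finset.mem_image.mpr ⟨(d 0, d 1), by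
      simp only [T, Finset.mem_insert, Finset.mem_singleton, Prod.mk.injEq]; omega, ?_⟩
    ext i
    fin_cases i <;> simp [e]
  refine ⟨.of fun a b => q.coeff (e (a, b)), funext fun x => ?_⟩
  rw [heval, MvPolynomial.eval_eq', Finset.sum_subset hsupp fun d _ hd => by
    simp [MvPolynomial.notMem_support_iff.mp hd], Finset.sum_image fun _ _ _ _ h => he h]
  simp [T, e, cubic, Fin.prod_univ_two]
  ring

lemma dderiv_cubic (v : ℝ × ℝ) (S : Matrix (Fin 4) (Fin 4) ℝ) :
    dderiv v (cubic S) = cubic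
      !![S 1 0 * v.1 + S 0 1 * v.2, S 1 1 * v.1 + 2 * S 0 2 * v.2, S 1 2 * v.1 + 3 * S 0 3 * v.2, 0;
        2 * S 2 0 * v.1 + S 1 1 * v.2, 2 * S 2 1 * v.1 + 2 * S 1 2 * v.2, 0, 0;
        3 * S 3 0 * v.1 + S 2 1 * v.2, 0, 0, 0;
        0, 0, 0, 0] := by
  funext x
  have h₁ : HasFDerivAt (fun y : ℝ × ℝ => y.1) (ContinuousLinearMap.fst ℝ ℝ ℝ) x :=
    hasFDerivAt_fst
  have h₂ : HasFDerivAt (fun y : ℝ × ℝ => y.2) (ContinuousLinearMap.snd ℝ ℝ ℝ) x :=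
    hasFDerivAt_snd
  have H : HasFDerivAt (cubic S) _ x :=
    (((((((((hasFDerivAt_const (S 0 0) x).add (h₁.const_mul (S 1 0))).add
    (h₂.const_mul (S 0 1))).add ((h₁.pow 2).const_mul (S 2 0))).add
    ((h₁.const_mul (S 1 1)).mul h₂)).add ((h₂.pow 2).const_mul (S 0 2))).add
    ((h₁.pow 3).const_mul (S 3 0))).add (((h₁.pow 2).const_mul (S 2 1)).mul h₂)).add
    ((h₁.const_mul (S 1 2)).mul (h₂.pow 2))).add ((h₂.pow 3).const_mul (S 0 3))
  rw [dderiv, H.fderiv]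
  simp [cubic]
  ring

lemma hess_cubic (S : Matrix (Fin 4) (Fin 4) ℝ) (x : ℝ × ℝ) :
    hess (cubic S) x =
      !![2 * S 2 0 + 6 * S 3 0 * x.1 + 2 * S 2 1 * x.2,
          S 1 1 + 2 * S 2 1 * x.1 + 2 * S 1 2 * x.2;
        S 1 1 + 2 * S 2 1 * x.1 + 2 * S 1 2 * x.2,
          2 * S 0 2 + 2 * S 1 2 * x.1 + 6 * S 0 3 * x.2] := by
  simp only [hess, d2, dderiv_cubic]
  ext i j
  fin_cases i <;> fin_cases j <;> simp [cubic, -mul_eq_mul_left_iff, -mul_eq_mul_right_iff] <;> ring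

lemma isSymm_hess_cubic (S : Matrix (Fin 4) (Fin 4) ℝ) (x : ℝ × ℝ) :
    (hess (cubic S) x).IsSymm := by
  rw [hess_cubic]
  exact .ext fun i j => by fin_cases i <;> fin_cases j <;> rfl

lemma acoef_cubic (p : Fin 3 → ℝ × ℝ) (S : Matrix (Fin 4) (Fin 4) ℝ) :
    acoef p (cubic S) = √(area p) • ![6 * S 3 0, 2 * S 2 1, 2 * S 1 2, 6 * S 0 3] := by
  ext i
  fin_cases i <;> simp [acoef, d3, dderiv_cubic, cubic, -mul_eq_mul_left_iff] <;> ring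

lemma dderiv_comp_sub (v a : ℝ × ℝ) (f : ℝ × ℝ → ℝ) :
    dderiv v (fun x => f (x - a)) = fun x => dderiv v f (x - a) :=
  funext fun x => by rw [dderiv, fderiv_comp_sub]; rfl

lemma hess_comp_sub (a : ℝ × ℝ) (f : ℝ × ℝ → ℝ) :
    hess (fun x => f (x - a)) = fun x => hess f (x - a) := by
  funext x
  simp only [hess, d2, dderiv_comp_sub]

lemma phiK_eq_cubic_comp_sub (p : Fin 3 → ℝ × ℝ) :
    phiK p = ![fun x => cubic (Matrix.single 3 0 (6 * √(area p))⁻¹) (x - centroid p),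
      fun x => cubic (Matrix.single 2 1 (2 * √(area p))⁻¹) (x - centroid p),
      fun x => cubic (Matrix.single 1 2 (2 * √(area p))⁻¹) (x - centroid p),
      fun x => cubic (Matrix.single 0 3 (6 * √(area p))⁻¹) (x - centroid p)] := by
  funext i x
  fin_cases i <;> simp [phiK, cubic] <;> ring

lemma hess_phiK (p : Fin 3 → ℝ × ℝ) (i : Fin 4) (x : ℝ × ℝ) :
    hess (phiK p i) x = (√(area p))⁻¹ •
      ![!![(x - centroid p).1, 0; 0, 0],
        !![(x - centroid p).2, (x - centroid p).1; (x - centroid p).1, 0],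
        !![0, (x - centroid p).2; (x - centroid p).2, (x - centroid p).1],
        !![0, 0; 0, (x - centroid p).2]] i := by
  fin_cases i <;>
  · simp only [phiK_eq_cubic_comp_sub, Fin.reduceFinMk, Matrix.cons_val]
    rw [hess_comp_sub]
    simp only [hess_cubic]
    ext j k
    fin_cases j <;> fin_cases k <;>
      simp [-mul_eq_mul_left_iff, -mul_eq_mul_right_iff] <;> ring

lemma continuous_hess_phiK (p : Fin 3 → ℝ × ℝ) (i : Fin 4) : Continuous (hess (phiK p i)) :=
  continuous_matrix fun j k => by
    fin_cases i <;> fin_cases j <;> fin_cases k <;> simp [hess_phiK] <;> fun_prop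

lemma hess_cubic_eq_hess_centroid_add (p : Fin 3 → ℝ × ℝ) (hA : 0 < area p)
    (S : Matrix (Fin 4) (Fin 4) ℝ) (x : ℝ × ℝ) :
    hess (cubic S) x =
      hess (cubic S) (centroid p) + ∑ i, acoef p (cubic S) i • hess (phiK p i) x := by
  have hs : √(area p) ≠ 0 := (Real.sqrt_pos.mpr hA).ne'
  simp only [acoef_cubic, hess_phiK, Fin.sum_univ_four, hess_cubic]
  ext i j
  fin_cases i <;> fin_cases j <;> simp <;> field_simp <;> ring

lemma area_pos {p : Fin 3 → ℝ × ℝ} (hp : Ccw p) : 0 < area p := half_pos hp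

lemma len_neg (v : ℝ × ℝ) : len (-v) = len v := by simp [len]

lemma len_pos_of_crossp_ne_zero {u v : ℝ × ℝ} (h : crossp u v ≠ 0) : 0 < len u := by
  rw [len, Real.sqrt_pos]
  by_contra! h'
  have h₁ : u.1 = 0 := by nlinarith [sq_nonneg u.1, sq_nonneg u.2]
  have h₂ : u.2 = 0 := by nlinarith [sq_nonneg u.1, sq_nonneg u.2]
  exact h (by simp [crossp, h₁, h₂])

lemma sin_arccos_dotp_div {u v : ℝ × ℝ} (hu : len u ≠ 0) (hv : len v ≠ 0) :
    Real.sin (Real.arccos (dotp u v / (len u * len v))) = |crossp u v| / (len u * len v) := by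
  have hlen : ∀ w : ℝ × ℝ, len w ^ 2 = w.1 ^ 2 + w.2 ^ 2 := fun w =>
    Real.sq_sqrt (by positivity)
  have lagrange : 1 - (dotp u v / (len u * len v)) ^ 2 = (crossp u v / (len u * len v)) ^ 2 := by
    field_simp
    rw [hlen, hlen]
    simp only [dotp, crossp]
    ring
  rw [Real.sin_arccos, lagrange, Real.sqrt_sq_eq_abs, abs_div, abs_of_pos (a := len u * len v)]
  exact mul_pos ((Real.sqrt_nonneg _).lt_of_ne' hu) ((Real.sqrt_nonneg _).lt_of_ne' hv)

lemma crossp_edgeVec (p : Fin 3 → ℝ × ℝ) (j : Fin 3) :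
    crossp (edgeVec p j) (edgeVec p (j + 1)) = 2 * area p := by
  fin_cases j <;> simp [edgeVec, crossp, area, show (-1 : Fin 3) = 2 from rfl] <;> ring

lemma elen_pos {p : Fin 3 → ℝ × ℝ} (hp : Ccw p) (j : Fin 3) : 0 < elen p j :=
  len_pos_of_crossp_ne_zero (v := edgeVec p (j + 1)) (by
    rw [crossp_edgeVec]; exact (mul_pos two_pos (area_pos hp)).ne')

lemma sin_angleAt {p : Fin 3 → ℝ × ℝ} (hp : Ccw p) (i : Fin 3) :
    Real.sin (angleAt p i) = 2 * area p / (elen p (i - 1) * elen p (i + 1)) := by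
  have hu : p (i + 1) - p i = edgeVec p (i - 1) := by fin_cases i <;> rfl
  have hv : p (i - 1) - p i = -edgeVec p (i + 1) := by
    fin_cases i <;> simp [edgeVec, show (-1 : Fin 3) = 2 from rfl]
  have hc : crossp (edgeVec p (i - 1)) (-edgeVec p (i + 1)) = 2 * area p := by
    fin_cases i <;> simp [edgeVec, crossp, area, show (-1 : Fin 3) = 2 from rfl] <;> ring
  have hne : len (-edgeVec p (i + 1)) ≠ 0 := by rw [len_neg]; exact (elen_pos hp _).ne'
  rw [angleAt, hu, hv, sin_arccos_dotp_div (elen_pos hp _).ne' hne, hc, len_neg,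
    abs_of_pos (mul_pos two_pos (area_pos hp))]
  rfl

lemma outerProd_smul (a b : ℝ) (v w : ℝ × ℝ) :
    outerProd (a • v) (b • w) = (a * b) • outerProd v w := by
  ext i j
  fin_cases i <;> fin_cases j <;> simp [outerProd] <;> ring

lemma phiHHJ_eq {p : Fin 3 → ℝ × ℝ} (hp : Ccw p) (j : Fin 3) :
    phiHHJ p j = (-(elen p j ^ 2) / (8 * area p ^ 2)) •
      (outerProd (edgeVec p (j - 1)) (edgeVec p (j + 1)) +
        outerProd (edgeVec p (j + 1)) (edgeVec p (j - 1))) := by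
  have hj : j - 1 - 1 = j + 1 ∧ j - 1 + 1 = j ∧ j + 1 - 1 = j ∧ j + 1 + 1 = j - 1 := by
    fin_cases j <;> decide
  have hA : area p ≠ 0 := (area_pos hp).ne'
  have := elen_pos hp (j - 1); have := elen_pos hp j; have := elen_pos hp (j + 1)
  rw [phiHHJ, sin_angleAt hp, sin_angleAt hp, hj.1, hj.2.1, hj.2.2.1, hj.2.2.2, tvec, tvec,
    outerProd_smul, outerProd_smul, mul_comm (elen p (j + 1))⁻¹, ← smul_add, smul_smul]
  congr 1
  field_simp
  ring

lemma qf_nvec (C : Matrix (Fin 2) (Fin 2) ℝ) (p : Fin 3 → ℝ × ℝ) (j : Fin 3) :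
    qf C (nvec p j) = qf C ((edgeVec p j).2, -(edgeVec p j).1) / elen p j ^ 2 := by
  simp only [nvec, tvec, qf, Prod.smul_fst, Prod.smul_snd, smul_eq_mul]
  field_simp

lemma sum_qf_nvec_smul_phiHHJ {p : Fin 3 → ℝ × ℝ} (hp : Ccw p) {C : Matrix (Fin 2) (Fin 2) ℝ}
    (hC : C.IsSymm) : ∑ j, qf C (nvec p j) • phiHHJ p j = C := by
  have hA : area p ≠ 0 := (area_pos hp).ne'
  have hterm : ∀ j, qf C (nvec p j) • phiHHJ p j =
      (-qf C ((edgeVec p j).2, -(edgeVec p j).1) / (8 * area p ^ 2)) •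
        (outerProd (edgeVec p (j - 1)) (edgeVec p (j + 1)) +
          outerProd (edgeVec p (j + 1)) (edgeVec p (j - 1))) := by
    intro j
    have := elen_pos hp j
    rw [qf_nvec, phiHHJ_eq hp, smul_smul]
    congr 1
    field_simp
  simp only [hterm, Fin.sum_univ_three]
  -- after clearing `8 |K|²`, a polynomial identity in the vertex coordinates
  have hC01 := hC.apply 0 1
  ext i k
  fin_cases i <;> fin_cases k <;>
  · simp [outerProd, edgeVec, qf, show (-1 : Fin 3) = 2 from rfl]
    field_simp
    simp only [area, crossp, Prod.fst_sub, Prod.snd_sub, hC01]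
    ring

lemma qf_add (A B : Matrix (Fin 2) (Fin 2) ℝ) (v : ℝ × ℝ) : qf (A + B) v = qf A v + qf B v := by
  simp only [qf, Matrix.add_apply]; ring

lemma qf_smul (c : ℝ) (A : Matrix (Fin 2) (Fin 2) ℝ) (v : ℝ × ℝ) : qf (c • A) v = c * qf A v := by
  simp only [qf, Matrix.smul_apply, smul_eq_mul]; ring

lemma continuous_qf {τ : ℝ × ℝ → Matrix (Fin 2) (Fin 2) ℝ} (hτ : Continuous τ) (v : ℝ × ℝ) :
    Continuous fun x => qf (τ x) v := by
  have := hτ.matrix_elem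
  unfold qf
  fun_prop

lemma edgeAvg_const (p : Fin 3 → ℝ × ℝ) (j : Fin 3) (c : ℝ) : edgeAvg p j (fun _ => c) = c := by
  simp [edgeAvg]

lemma edgeAvg_add (p : Fin 3 → ℝ × ℝ) (j : Fin 3) {f g : ℝ × ℝ → ℝ} (hf : Continuous f)
    (hg : Continuous g) : edgeAvg p j (fun x => f x + g x) = edgeAvg p j f + edgeAvg p j g := by
  have hseg : Continuous fun s : ℝ => p (j + 1) + s • (p (j - 1) - p (j + 1)) := by fun_prop
  exact intervalIntegral.integral_add ((hf.comp hseg).intervalIntegrable _ _)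
    ((hg.comp hseg).intervalIntegrable _ _)

lemma edgeAvg_const_mul (p : Fin 3 → ℝ × ℝ) (j : Fin 3) (c : ℝ) (f : ℝ × ℝ → ℝ) :
    edgeAvg p j (fun x => c * f x) = c * edgeAvg p j f :=
  intervalIntegral.integral_const_mul c _

lemma PiHHJ_add (p : Fin 3 → ℝ × ℝ) {τ σ : ℝ × ℝ → Matrix (Fin 2) (Fin 2) ℝ}
    (hτ : Continuous τ) (hσ : Continuous σ) : PiHHJ p (τ + σ) = PiHHJ p τ + PiHHJ p σ := by
  simp only [PiHHJ, Pi.add_apply, qf_add, edgeAvg_add p _ (continuous_qf hτ _) (continuous_qf hσ _),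
    add_smul, Finset.sum_add_distrib]

lemma PiHHJ_smul (p : Fin 3 → ℝ × ℝ) (c : ℝ) (τ : ℝ × ℝ → Matrix (Fin 2) (Fin 2) ℝ) :
    PiHHJ p (c • τ) = c • PiHHJ p τ := by
  simp only [PiHHJ, Pi.smul_apply, qf_smul, edgeAvg_const_mul, Finset.smul_sum, smul_smul]

lemma PiHHJ_sum (p : Fin 3 → ℝ × ℝ) {ι : Type*} (s : Finset ι)
    {τ : ι → ℝ × ℝ → Matrix (Fin 2) (Fin 2) ℝ} (hτ : ∀ i ∈ s, Continuous (τ i)) :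
    PiHHJ p (∑ i ∈ s, τ i) = ∑ i ∈ s, PiHHJ p (τ i) := by
  classical
  induction s using Finset.induction_on with
  | empty => simpa using PiHHJ_smul p 0 0
  | insert i s hi ih =>
    rw [Finset.forall_mem_insert] at hτ
    have hsum : Continuous (∑ i ∈ s, τ i) := by
      rw [Finset.sum_fn]; exact continuous_finsetSum _ hτ.2
    rw [Finset.sum_insert hi, Finset.sum_insert hi, PiHHJ_add p hτ.1 hsum, ih hτ.2]

lemma PiHHJ_const {p : Fin 3 → ℝ × ℝ} (hp : Ccw p) {C : Matrix (Fin 2) (Fin 2) ℝ}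
    (hC : C.IsSymm) : PiHHJ p (fun _ => C) = C := by
  simp only [PiHHJ, edgeAvg_const, sum_qf_nvec_smul_phiHHJ hp hC]

lemma PiHHJ_const_add_sum {p : Fin 3 → ℝ × ℝ} (hp : Ccw p) {C : Matrix (Fin 2) (Fin 2) ℝ}
    (hC : C.IsSymm) {ι : Type*} (s : Finset ι) (a : ι → ℝ)
    {τ : ι → ℝ × ℝ → Matrix (Fin 2) (Fin 2) ℝ} (hτ : ∀ i ∈ s, Continuous (τ i)) :
    PiHHJ p (fun x => C + ∑ i ∈ s, a i • τ i x) = C + ∑ i ∈ s, a i • PiHHJ p (τ i) := by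
  have haτ : ∀ i ∈ s, Continuous (a i • τ i) := fun i hi => (hτ i hi).const_smul _
  have hfun : (fun x => C + ∑ i ∈ s, a i • τ i x) = (fun _ => C) + ∑ i ∈ s, a i • τ i := by
    rw [Finset.sum_fn]; rfl
  have hcont : Continuous (∑ i ∈ s, a i • τ i) := by
    rw [Finset.sum_fn]; exact continuous_finsetSum _ haτ
  rw [hfun, PiHHJ_add p continuous_const hcont, PiHHJ_const hp hC, PiHHJ_sum p s haτ]
  simp only [PiHHJ_smul]

end PaperStmt

open PaperStmt in
/-- For every polynomial `w` of degree ≤ 3, on `K` one has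
`∇²w − Π_HHJ(∇²w) = Σ_{i=1}^{4} a_i (∇²φ_i − Π_HHJ(∇²φ_i))`, where
`a₁ = |K|^{1/2} ∂³w/∂x₁³`, `a₂ = |K|^{1/2} ∂³w/∂x₁²∂x₂`,
`a₃ = |K|^{1/2} ∂³w/∂x₁∂x₂²`, `a₄ = |K|^{1/2} ∂³w/∂x₂³`. -/
theorem hess_interp_error_expansion
    (p : Fin 3 → ℝ × ℝ) (hp : Ccw p)
    (w : ℝ × ℝ → ℝ) (hw : IsPolyFun 3 w) :
    ∀ x ∈ tri p,
      hess w x - PiHHJ p (hess w) =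
        ∑ i : Fin 4, acoef p w i • (hess (phiK p i) x - PiHHJ p (hess (phiK p i))) := by
  obtain ⟨S, rfl⟩ := hw.exists_eq_cubic
  intro x _
  have hsplit := hess_cubic_eq_hess_centroid_add p (area_pos hp) S
  have hinterp := (congrArg (PiHHJ p) (funext hsplit)).trans
    (PiHHJ_const_add_sum hp (isSymm_hess_cubic S _) _ _ fun i _ => continuous_hess_phiK p i)
  rw [hinterp, hsplit x]
  simp only [smul_sub, Finset.sum_sub_distrib]
  abel
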